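/- In two-color FLAG COLORING, a properly two-colored complete bipartite graph K_{m,n} (with m, n ≥ 1, each part monochromatic in one of the two colors) is a P-position if and only if m ≥ 2 and n ≥ 2. -/

import Mathlib

/-- The minimum excludant of a set of naturals. -/
noncomputable def mexN (S : Set ℕ) : ℕ := sInf {n | n ∉ S}

namespace FlagColoring

variable {V : Type} {C : Type}

/-- The subgraph of `G` induced by the color class `c` of the coloring `f`
(as a graph on the same vertex set). -/
def colorSub (G : SimpleGraph V) (f : V → C) (c : C) : SimpleGraph V where
  Adj u w := G.Adj u w ∧ f u = c ∧ f w = c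
  symm := ⟨fun _ _ h => ⟨h.1.symm, h.2.2, h.2.1⟩⟩
  loopless := ⟨fun u h => G.irrefl h.1⟩

open Classical in
/-- One move of FLAG COLORING on the graph `G`: choose a vertex `v` and a color `c'`
different from the color `f v` of `v` and appearing on some neighbor of `v`, and recolor
the whole connected monochromatic component of `v` (its component in the subgraph induced
by the vertices of color `f v`) with `c'`. -/
def Move (G : SimpleGraph V) (f g : V → C) : Prop :=
  ∃ v c', c' ≠ f v ∧ (∃ u, G.Adj v u ∧ f u = c') ∧
    g = fun w => if (colorSub G f (f v)).Reachable v w then c' else f w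

open Classical in
/-- The number of ordered pairs of adjacent, differently colored vertices.
Every move strictly decreases this quantity, so it bounds the length of play. -/
noncomputable def boundary [Fintype V] (G : SimpleGraph V) (f : V → C) : ℕ :=
  (Finset.univ.filter (fun p : V × V => G.Adj p.1 p.2 ∧ f p.1 ≠ f p.2)).card

/-- Grundy value computation with fuel. -/
noncomputable def grundyAux (G : SimpleGraph V) : ℕ → (V → C) → ℕ
  | 0, _ => 0
  | (n+1), f => mexN {k | ∃ g, Move G f g ∧ grundyAux G n g = k}

/-- The Grundy value (nimber) of the FLAG COLORING position `(G, f)`. Since every move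
strictly decreases `boundary`, fuel `boundary G f + 1` suffices to compute the true
Grundy value: the mex of the Grundy values of the options (`0` if there are no options).
A position is a P-position exactly when its Grundy value is `0`. -/
noncomputable def grundy [Fintype V] (G : SimpleGraph V) (f : V → C) : ℕ :=
  grundyAux G (boundary G f + 1) f

end FlagColoring

/-- The complete bipartite graph `K_{m,n}` on `Fin m ⊕ Fin n`. -/
def KGraph (m n : ℕ) : SimpleGraph (Fin m ⊕ Fin n) :=
  SimpleGraph.fromRel (fun u v => u.isLeft ∧ v.isRight)

/-- The proper 2-coloring of `K_{m,n}`: each part is monochromatic. -/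
def KColor (m n : ℕ) : Fin m ⊕ Fin n → Bool := fun v => v.isLeft

/-!
A properly colored vertex is its own monochromatic component, so every move from the proper
coloring of `K_{m,n}` flips a single vertex `v`. If `v` has a second vertex on its side, the
new color class of `v` is connected (through `v`), and flooding it with the other color
produces a monochromatic coloring, which has no moves; hence no option of the initial
position is a P-position. If instead some side is a single vertex, flipping it makes the
coloring monochromatic at once.
-/

/-- Finiteness excludes `S = univ`, where `mexN S = sInf ∅ = 0` is a junk value. -/
theorem mexN_eq_zero_iff {S : Set ℕ} (hS : S.Finite) : mexN S = 0 ↔ 0 ∉ S := by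
  refine ⟨fun h h0 => ?_, fun h0 => Nat.sInf_eq_zero.mpr (Or.inl h0)⟩
  have hmem : mexN S ∈ {n | n ∉ S} := Nat.sInf_mem hS.infinite_compl.nonempty
  exact hmem (h ▸ h0)

namespace FlagColoring

variable {V C : Type} {G : SimpleGraph V}

theorem colorSub_reachable_apply {f : V → C} {c : C} {v w : V}
    (h : (colorSub G f c).Reachable v w) (hv : f v = c) : f w = c := by
  obtain ⟨p⟩ := h
  induction p with
  | nil => exact hv
  | cons hadj _ ih => exact ih hadj.2.2

theorem colorSub_reachable_iff_eq {f : V → C} {v w : V} (hv : ∀ u, G.Adj v u → f u ≠ f v) :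
    (colorSub G f (f v)).Reachable v w ↔ w = v := by
  refine ⟨fun ⟨p⟩ => ?_, fun h => h ▸ .rfl⟩
  cases p with
  | nil => rfl
  | cons hadj _ => exact absurd hadj.2.2 (hv _ hadj.1)

theorem Move.boundary_lt [Fintype V] {f g : V → C} (h : Move G f g) :
    boundary G g < boundary G f := by
  obtain ⟨v, c', hc', ⟨u, hvu, hu⟩, rfl⟩ := h
  set R := (colorSub G f (f v)).Reachable v
  have hR : ∀ w, R w → f w = f v := fun w hw => colorSub_reachable_apply hw rfl
  have hRu : ¬ R u := fun hr => hc' (hu ▸ hR u hr)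
  have hextend : ∀ a b, R a → G.Adj a b → f a = f b → R b := fun a b ha hab he =>
    ha.trans (SimpleGraph.Adj.reachable ⟨hab, hR a ha, he ▸ hR a ha⟩)
  refine Finset.card_lt_card (Finset.ssubset_iff_of_subset ?_ |>.mpr ⟨(v, u), ?_, ?_⟩)
  · rintro ⟨a, b⟩ hab
    simp only [Finset.mem_filter, Finset.mem_univ, true_and] at hab ⊢
    refine ⟨hab.1, fun he => hab.2 ?_⟩
    by_cases ha : R a <;> by_cases hb : R b
    · simp [ha, hb]
    · exact absurd (hextend a b ha hab.1 he) hb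
    · exact absurd (hextend b a hb hab.1.symm he.symm) ha
    · simpa [ha, hb] using he
  · simpa [hu] using ⟨hvu, hc'.symm⟩
  · simp [R, hRu, hu]

theorem grundyAux_succ [Fintype V] {N : ℕ} {f : V → C}
    (h : ∀ g, Move G f g → grundyAux G N g = grundy G g) :
    grundyAux G (N + 1) f = mexN {k | ∃ g, Move G f g ∧ grundy G g = k} := by
  rw [grundyAux]
  congr 1
  ext k
  exact exists_congr fun g => and_congr_right fun hg => by rw [h g hg]

theorem grundyAux_eq_grundy [Fintype V] (N : ℕ) (f : V → C) (hN : boundary G f < N) :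
    grundyAux G N f = grundy G f := by
  induction N using Nat.strong_induction_on generalizing f with
  | _ N ih =>
    obtain ⟨N, rfl⟩ := Nat.exists_eq_add_one_of_ne_zero (Nat.ne_zero_of_lt hN)
    have hopt : ∀ M, boundary G f ≤ M → M ≤ N →
        ∀ g, Move G f g → grundyAux G M g = grundy G g :=
      fun M hM hMN g hg => ih M (by omega) g (hg.boundary_lt.trans_le hM)
    rw [grundy, grundyAux_succ (hopt N (by omega) le_rfl),
      grundyAux_succ (hopt _ le_rfl (by omega))]

theorem grundy_eq_mexN [Fintype V] (f : V → C) :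
    grundy G f = mexN {k | ∃ g, Move G f g ∧ grundy G g = k} :=
  grundyAux_succ fun g hg => grundyAux_eq_grundy _ g hg.boundary_lt

open Classical in
theorem finite_setOf_move [Finite V] (f : V → C) : {g | Move G f g}.Finite := by
  refine (Set.finite_range fun p : V × V =>
    fun w => if (colorSub G f (f p.1)).Reachable p.1 w then f p.2 else f w).subset ?_
  rintro g ⟨v, c', -, ⟨u, -, rfl⟩, rfl⟩
  exact ⟨(v, u), rfl⟩

theorem grundy_eq_zero_iff [Fintype V] {f : V → C} :
    grundy G f = 0 ↔ ∀ g, Move G f g → grundy G g ≠ 0 := by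
  rw [grundy_eq_mexN]
  exact (mexN_eq_zero_iff ((finite_setOf_move f).image (grundy G))).trans (by simp)

theorem grundy_ne_zero_of_move [Fintype V] {f g : V → C} (h : Move G f g)
    (hg : grundy G g = 0) : grundy G f ≠ 0 :=
  fun hf => grundy_eq_zero_iff.mp hf g h hg

theorem grundy_const [Fintype V] (c : C) : grundy G (fun _ => c) = 0 :=
  grundy_eq_zero_iff.mpr fun _ ⟨_, _, hc', ⟨_, _, hu⟩, _⟩ => absurd hu.symm hc'

theorem Move.exists_eq_update [DecidableEq V] {f g : V → C}
    (hf : ∀ u w, G.Adj u w → f u ≠ f w) (h : Move G f g) :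
    ∃ v c', c' ≠ f v ∧ g = Function.update f v c' := by
  classical
  obtain ⟨v, c', hc', -, rfl⟩ := h
  refine ⟨v, c', hc', funext fun w => ?_⟩
  rw [Function.update_apply]
  exact if_congr (colorSub_reachable_iff_eq fun u hvu => (hf v u hvu).symm) rfl rfl

theorem move_const_of_reachable {f : V → C} {c : C} {v u : V} (hv : f v ≠ c) (hvu : G.Adj v u)
    (hu : f u = c)
    (hreach : ∀ w, f w ≠ c → (colorSub G f (f v)).Reachable v w) :
    Move G f (fun _ => c) := by
  classical
  refine ⟨v, c, hv.symm, ⟨u, hvu, hu⟩, funext fun w => ?_⟩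
  by_cases hw : f w = c
  · simp [hw]
  · simp [hreach w hw]

end FlagColoring

open FlagColoring

namespace KGraph

variable {m n : ℕ}

theorem adj_iff {u w : Fin m ⊕ Fin n} :
    (KGraph m n).Adj u w ↔ KColor m n u ≠ KColor m n w := by
  rcases u with i | i <;> rcases w with j | j <;> simp [KGraph, KColor]

theorem move_KColor_const {v y : Fin m ⊕ Fin n}
    (hv : ∀ x, KColor m n x = KColor m n v → x = v) (hy : KColor m n y ≠ KColor m n v) :
    Move (KGraph m n) (KColor m n) (fun _ => !KColor m n v) :=
  move_const_of_reachable (u := y) (by simp) (adj_iff.mpr hy.symm) (Bool.eq_not.mpr hy)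
    fun w hw => hv w (by simpa [Bool.eq_not] using hw) ▸ .rfl

theorem move_update_KColor_const {v x y : Fin m ⊕ Fin n} (hxv : x ≠ v)
    (hx : KColor m n x = KColor m n v) (hy : KColor m n y ≠ KColor m n v) :
    Move (KGraph m n) (Function.update (KColor m n) v (!KColor m n v))
      (fun _ => KColor m n v) := by
  set f := Function.update (KColor m n) v (!KColor m n v)
  have hyv : y ≠ v := fun h => hy (h ▸ rfl)
  have hfne : ∀ w, w ≠ v → f w = KColor m n w := fun w hw => Function.update_of_ne hw _ _
  have hfy : f y = !KColor m n v := by rw [hfne y hyv, Bool.eq_not]; exact hy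
  have hfv : f v = !KColor m n v := Function.update_self ..
  refine move_const_of_reachable (v := y) (u := x) (by simp [hfy])
    (adj_iff.mpr (hx ▸ hy)) (by rw [hfne x hxv, hx]) fun w hw => ?_
  have hyv_adj : (colorSub (KGraph m n) f (f y)).Adj y v :=
    ⟨adj_iff.mpr hy, rfl, hfv.trans hfy.symm⟩
  by_cases hwv : w = v
  · exact hwv ▸ hyv_adj.reachable
  · have hw' : KColor m n w ≠ KColor m n v := by rwa [hfne w hwv] at hw
    have hvw_adj : (colorSub (KGraph m n) f (f y)).Adj v w :=
      ⟨adj_iff.mpr hw'.symm, hyv_adj.2.2, by rw [hfne w hwv, hfy, Bool.eq_not]; exact hw'⟩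
    exact hyv_adj.reachable.trans hvw_adj.reachable

theorem exists_KColor_ne (hm : 1 ≤ m) (hn : 1 ≤ n) (v : Fin m ⊕ Fin n) :
    ∃ y, KColor m n y ≠ KColor m n v := by
  rcases v with i | j
  · exact ⟨.inr ⟨0, hn⟩, by simp [KColor]⟩
  · exact ⟨.inl ⟨0, hm⟩, by simp [KColor]⟩

theorem exists_ne_KColor_eq (hm : 2 ≤ m) (hn : 2 ≤ n) (v : Fin m ⊕ Fin n) :
    ∃ x ≠ v, KColor m n x = KColor m n v := by
  have : Nontrivial (Fin m) := Fin.nontrivial_iff_two_le.mpr hm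
  have : Nontrivial (Fin n) := Fin.nontrivial_iff_two_le.mpr hn
  rcases v with i | j
  · obtain ⟨i', hi'⟩ := exists_ne i
    exact ⟨.inl i', by simpa using hi', rfl⟩
  · obtain ⟨j', hj'⟩ := exists_ne j
    exact ⟨.inr j', by simpa using hj', rfl⟩

theorem exists_forall_KColor_eq_imp_eq (h : m = 1 ∨ n = 1) :
    ∃ v : Fin m ⊕ Fin n, ∀ x, KColor m n x = KColor m n v → x = v := by
  rcases h with rfl | rfl
  · refine ⟨.inl 0, ?_⟩
    rintro (i | j) h
    · rw [Subsingleton.elim i 0]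
    · simp [KColor] at h
  · refine ⟨.inr 0, ?_⟩
    rintro (i | j) h
    · simp [KColor] at h
    · rw [Subsingleton.elim j 0]

end KGraph

/-- In two-color FLAG COLORING, a properly two-colored complete bipartite graph
`K_{m,n}` (`m, n ≥ 1`) is a P-position (Grundy value 0) iff `m ≥ 2` and `n ≥ 2`. -/
theorem completeBipartite_P (m n : ℕ) (hm : 1 ≤ m) (hn : 1 ≤ n) :
    FlagColoring.grundy (KGraph m n) (KColor m n) = 0 ↔ (2 ≤ m ∧ 2 ≤ n) := by
  constructor
  · intro hP
    by_contra hsmall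
    obtain ⟨v, hv⟩ := KGraph.exists_forall_KColor_eq_imp_eq (m := m) (n := n) (by omega)
    obtain ⟨y, hy⟩ := KGraph.exists_KColor_ne hm hn v
    exact grundy_ne_zero_of_move (KGraph.move_KColor_const hv hy) (grundy_const _) hP
  · rintro ⟨hm2, hn2⟩
    refine grundy_eq_zero_iff.mpr fun g hg => ?_
    obtain ⟨v, c, hc, rfl⟩ := hg.exists_eq_update fun _ _ => KGraph.adj_iff.mp
    obtain ⟨x, hxv, hx⟩ := KGraph.exists_ne_KColor_eq hm2 hn2 v
    obtain ⟨y, hy⟩ := KGraph.exists_KColor_ne hm hn v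
    rw [Bool.eq_not.mpr hc]
    exact grundy_ne_zero_of_move (KGraph.move_update_KColor_const hxv hx hy) (grundy_const _)
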